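/- arXiv:1909.11677 — 4 statements merged into one kernel-verified Lean document; each statement's English description precedes it below -/
import Mathlib

section
/- Let F be a nonempty closed convex set of density matrices containing a full-rank state. Define the generalized robustness via its dual form Rmax(ρ) = sup{⟨ρ,W⟩ : W ⪰ 0, ⟨W,σ⟩ ≤ 1 ∀σ ∈ F}. Then for any density matrix ρ, Rmax(ρ) ≥ Tr(ρ²) / max_{σ∈F} ⟨ρ,σ⟩. In particular, for a pure state ψ = |ψ⟩⟨ψ|, Rmax(ψ) ≥ 1 / max_{σ∈F} ⟨ψ,σ⟩. -/
/-!
The rescaled state `ρ / m` is a dual witness: it is positive semidefinite and its overlap with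
every free state is at most `1`, while its value is `Tr(ρ²) / m`. For this to bound the supremum
`Rmax` (which Lean's `sSup` sets to `0` on unbounded sets) the dual values must be bounded above:
the full-rank free state gives `ε • 1 ≤ τ` for some `ε > 0`, and `ρ ≤ 1`, so every witness `W`
has `⟨ρ, W⟩ ≤ Tr W ≤ ⟨τ, W⟩ / ε ≤ 1 / ε`.
-/

open Matrix
open scoped ComplexOrder

/-- Hilbert–Schmidt inner product (real part of Tr(A B)) on matrices. -/
noncomputable def ip {n : Type*} [Fintype n] (A B : Matrix n n ℂ) : ℝ := ((A * B).trace).re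

/-- A density matrix: positive semidefinite with trace one. -/
def IsDensity {n : Type*} [Fintype n] (ρ : Matrix n n ℂ) : Prop := ρ.PosSemidef ∧ ρ.trace = 1

/-- A pure state: a rank-one (trace-one) projection. -/
def IsPure {n : Type*} [Fintype n] (P : Matrix n n ℂ) : Prop := IsDensity P ∧ P * P = P

/-- Generalized robustness, dual form. -/
noncomputable def Rmax {n : Type*} [Fintype n] (F : Set (Matrix n n ℂ)) (ρ : Matrix n n ℂ) : ℝ :=
  sSup {x : ℝ | ∃ W : Matrix n n ℂ, W.PosSemidef ∧ (∀ σ ∈ F, ip W σ ≤ 1) ∧ x = ip ρ W}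

/-- Maximal overlap with the free set. -/
noncomputable def RminInv {n : Type*} [Fintype n] (F : Set (Matrix n n ℂ)) (φ : Matrix n n ℂ) : ℝ :=
  sSup {x : ℝ | ∃ σ ∈ F, x = ip φ σ}

/-- Rmin: reciprocal of maximal overlap with the free set. -/
noncomputable def Rmin {n : Type*} [Fintype n] (F : Set (Matrix n n ℂ)) (φ : Matrix n n ℂ) : ℝ :=
  1 / RminInv F φ

open scoped MatrixOrder

namespace Matrix

variable {n : Type*} [Fintype n] [DecidableEq n]

lemma PosSemidef.le_algebraMap_re_trace {A : Matrix n n ℂ} (hA : A.PosSemidef) :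
    A ≤ algebraMap ℝ _ A.trace.re := by
  rw [le_algebraMap_iff_spectrum_le hA.1.isSelfAdjoint, hA.1.spectrum_real_eq_range_eigenvalues]
  rintro _ ⟨i, rfl⟩
  have htrace : A.trace.re = ∑ j, hA.1.eigenvalues j := by
    simp [hA.1.trace_eq_sum_eigenvalues]
  rw [htrace]
  exact Finset.single_le_sum (fun j _ => hA.eigenvalues_nonneg j) (Finset.mem_univ i)

lemma PosDef.exists_pos_algebraMap_le {A : Matrix n n ℂ} (hA : A.PosDef) :
    ∃ ε > 0, algebraMap ℝ _ ε ≤ A := by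
  cases isEmpty_or_nonempty n
  · exact ⟨1, one_pos, (Subsingleton.elim _ _).le⟩
  · exact (CFC.exists_pos_algebraMap_le_iff hA.1.isSelfAdjoint).mpr fun _ hx =>
      (isStrictlyPositive_iff_posDef.mpr hA).spectrum_pos hx

omit [DecidableEq n] in
lemma PosSemidef.re_trace_mul_nonneg {A B : Matrix n n ℂ} (hA : A.PosSemidef)
    (hB : B.PosSemidef) : 0 ≤ (A * B).trace.re := by
  classical
  obtain ⟨C, rfl⟩ := CStarAlgebra.nonneg_iff_eq_star_mul_self.mp hA.nonneg
  rw [Matrix.mul_assoc, trace_mul_comm]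
  exact (Complex.nonneg_iff.mp (hB.mul_mul_conjTranspose_same C).trace_nonneg).1

end Matrix

section InnerProduct

variable {n : Type*} [Fintype n]

lemma ip_comm (A B : Matrix n n ℂ) : ip A B = ip B A := by
  rw [ip, ip, trace_mul_comm]

lemma ip_smul_left (c : ℝ) (A B : Matrix n n ℂ) : ip (c • A) B = c * ip A B := by
  simp [ip, Matrix.smul_mul, trace_smul]

lemma ip_smul_right (c : ℝ) (A B : Matrix n n ℂ) : ip A (c • B) = c * ip A B := by
  rw [ip_comm, ip_smul_left, ip_comm]

lemma ip_algebraMap_left [DecidableEq n] (c : ℝ) (W : Matrix n n ℂ) :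
    ip (algebraMap ℝ _ c) W = c * W.trace.re := by
  rw [Algebra.algebraMap_eq_smul_one, ip_smul_left, ip, Matrix.one_mul]

lemma ip_le_ip_of_le {A B W : Matrix n n ℂ} (hAB : A ≤ B) (hW : W.PosSemidef) :
    ip A W ≤ ip B W := by
  have := PosSemidef.re_trace_mul_nonneg (Matrix.le_iff.mp hAB) hW
  rwa [Matrix.sub_mul, trace_sub, Complex.sub_re, sub_nonneg] at this

lemma ip_self_eq_one_of_mul_self_eq {ρ : Matrix n n ℂ} (htr : ρ.trace = 1) (hρρ : ρ * ρ = ρ) :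
    ip ρ ρ = 1 := by
  rw [ip, hρρ, htr, Complex.one_re]

end InnerProduct

lemma ip_le_Rmax {n : Type*} [Fintype n] [DecidableEq n] {F : Set (Matrix n n ℂ)}
    {τ : Matrix n n ℂ} (hτF : τ ∈ F) (hτ : τ.PosDef) {ρ : Matrix n n ℂ} (hρ : IsDensity ρ)
    {W : Matrix n n ℂ} (hW : W.PosSemidef) (hWF : ∀ σ ∈ F, ip W σ ≤ 1) :
    ip ρ W ≤ Rmax F ρ := by
  obtain ⟨ε, hε, hετ⟩ := hτ.exists_pos_algebraMap_le
  refine le_csSup ⟨1 / ε, ?_⟩ ⟨W, hW, hWF, rfl⟩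
  rintro _ ⟨V, hV, hVF, rfl⟩
  have hρV : ip ρ V ≤ V.trace.re := by
    have := ip_le_ip_of_le hρ.1.le_algebraMap_re_trace hV
    rwa [hρ.2, Complex.one_re, ip_algebraMap_left, one_mul] at this
  have hτV : ε * V.trace.re ≤ 1 := by
    rw [← ip_algebraMap_left]
    exact (ip_le_ip_of_le hετ hV).trans ((ip_comm τ V).trans_le (hVF τ hτF))
  exact hρV.trans ((le_div_iff₀' hε).mpr hτV)

theorem stmt3_general {d : ℕ} (F : Set (Matrix (Fin d) (Fin d) ℂ))
    (τ : Matrix (Fin d) (Fin d) ℂ) (hτF : τ ∈ F) (hτ : τ.PosDef)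
    (ρ : Matrix (Fin d) (Fin d) ℂ) (hρ : IsDensity ρ)
    (m : ℝ) (hm0 : 0 < m) (hub : ∀ σ ∈ F, ip ρ σ ≤ m) :
    Rmax F ρ ≥ ip ρ ρ / m ∧ (ρ * ρ = ρ → Rmax F ρ ≥ 1 / m) := by
  have hW : (m⁻¹ • ρ).PosSemidef := hρ.1.smul (inv_nonneg.mpr hm0.le)
  have hWF : ∀ σ ∈ F, ip (m⁻¹ • ρ) σ ≤ 1 := fun σ hσ => by
    rw [ip_smul_left]
    exact inv_mul_le_one_of_le₀ (hub σ hσ) hm0.le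
  have hbound : ip ρ ρ / m ≤ Rmax F ρ := by
    have := ip_le_Rmax hτF hτ hρ hW hWF
    rwa [ip_smul_right, ← div_eq_inv_mul] at this
  refine ⟨hbound, fun hρρ => ?_⟩
  rwa [ip_self_eq_one_of_mul_self_eq hρ.2 hρρ] at hbound

/-- Lower bound on the generalized robustness: Rmax(ρ) ≥ Tr(ρ²)/max overlap,
and in particular Rmax(ψ) ≥ 1/max overlap for pure ψ. -/
theorem stmt3 {d : ℕ} (F : Set (Matrix (Fin d) (Fin d) ℂ))
    (hne : F.Nonempty) (hcl : IsClosed F) (hconv : Convex ℝ F)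
    (hdens : ∀ σ ∈ F, IsDensity σ)
    (τ : Matrix (Fin d) (Fin d) ℂ) (hτF : τ ∈ F) (hτ : τ.PosDef)
    (ρ : Matrix (Fin d) (Fin d) ℂ) (hρ : IsDensity ρ)
    (m : ℝ) (hm0 : 0 < m) (hub : ∀ σ ∈ F, ip ρ σ ≤ m) (hach : ∃ σ ∈ F, ip ρ σ = m) :
    Rmax F ρ ≥ ip ρ ρ / m ∧ (ρ * ρ = ρ → Rmax F ρ ≥ 1 / m) :=
  stmt3_general F τ hτF hτ ρ hρ m hm0 hub
end

section
/- Let F be a nonempty closed convex set of density matrices, let ρ be a density matrix whose support contains the support of some σ ∈ F, and let k > 1. Then the set {W Hermitian : 0 ⪯ W ⪯ 𝟙, ⟨ρ,W⟩ = 1, and ⟨W,σ'⟩ ≤ 1/k for all σ' ∈ F} is empty. (Consequently, exact distillation of any resourceful pure state from a state whose support contains a free state is impossible.) -/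
open Matrix
open scoped ComplexOrder

/-! A unit-fidelity witness `W` satisfies `⟨ρ, 1 - W⟩ = 0` with both `ρ` and `1 - W` positive
semidefinite, which forces `(1 - W) ρ = 0`. So `W` acts as the identity on `supp ρ ⊇ supp σ`,
whence `⟨W, σ⟩ = tr σ = 1 > 1/k`. -/

open scoped MatrixOrder

theorem Matrix.PosSemidef.mul_eq_zero_of_re_trace_mul_eq_zero {𝕜 n : Type*} [RCLike 𝕜]
    [Fintype n] {A B : Matrix n n 𝕜} (hA : A.PosSemidef) (hB : B.PosSemidef)
    (h : RCLike.re (A * B).trace = 0) : A * B = 0 := by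
  classical
  obtain ⟨a, rfl⟩ := CStarAlgebra.nonneg_iff_eq_star_mul_self.mp hA.nonneg
  obtain ⟨b, rfl⟩ := CStarAlgebra.nonneg_iff_eq_star_mul_self.mp hB.nonneg
  simp only [star_eq_conjTranspose] at h ⊢
  set C := a * bᴴ
  have htrace : (aᴴ * a * (bᴴ * b)).trace = (Cᴴ * C).trace := by
    simp only [C, conjTranspose_mul, conjTranspose_conjTranspose]
    rw [← Matrix.mul_assoc, Matrix.trace_mul_comm]
    simp only [Matrix.mul_assoc]
  have hC : C = 0 := by
    have him := (RCLike.nonneg_iff.mp (posSemidef_conjTranspose_mul_self C).trace_nonneg).2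
    rw [← trace_conjTranspose_mul_self_eq_zero_iff, ← htrace]
    exact RCLike.ext (by simpa using h) (by simpa [htrace] using him)
  calc aᴴ * a * (bᴴ * b) = aᴴ * C * b := by simp only [C, Matrix.mul_assoc]
    _ = 0 := by rw [hC, Matrix.mul_zero, Matrix.zero_mul]

theorem Matrix.mul_eq_zero_of_range_mulVecLin_le {R l m n p : Type*} [CommRing R] [Fintype m]
    [Fintype n] [Fintype p] {A : Matrix l m R} {B : Matrix m n R} {C : Matrix m p R}
    (hCB : LinearMap.range C.mulVecLin ≤ LinearMap.range B.mulVecLin) (hAB : A * B = 0) :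
    A * C = 0 := by
  classical
  have hB : LinearMap.range B.mulVecLin ≤ LinearMap.ker A.mulVecLin := by
    rw [LinearMap.range_le_ker_iff, ← Matrix.mulVecLin_mul, hAB, Matrix.mulVecLin_zero]
  apply Matrix.toLin'.injective
  rw [Matrix.toLin'_apply', map_zero, Matrix.mulVecLin_mul, ← LinearMap.range_le_ker_iff]
  exact hCB.trans hB

theorem stmt7_general {d : ℕ} (F : Set (Matrix (Fin d) (Fin d) ℂ))
    (hdens : ∀ σ' ∈ F, IsDensity σ')
    (ρ σ : Matrix (Fin d) (Fin d) ℂ) (hρ : IsDensity ρ) (hσF : σ ∈ F)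
    (hsupp : LinearMap.range σ.mulVecLin ≤ LinearMap.range ρ.mulVecLin)
    (k : ℝ) (hk : 1 < k) :
    {W : Matrix (Fin d) (Fin d) ℂ | W.IsHermitian ∧ W.PosSemidef ∧
      ((1 : Matrix (Fin d) (Fin d) ℂ) - W).PosSemidef ∧ ip ρ W = 1 ∧
      ∀ σ' ∈ F, ip W σ' ≤ 1 / k} = ∅ := by
  refine Set.eq_empty_of_forall_notMem fun W ⟨_, _, hcompl, hfid, hwit⟩ ↦ ?_
  have hcomplρ : (1 - W) * ρ = 0 := by
    refine hcompl.mul_eq_zero_of_re_trace_mul_eq_zero hρ.1 ?_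
    rw [sub_mul, one_mul, trace_sub, trace_mul_comm, hρ.2, map_sub, RCLike.one_re]
    exact sub_eq_zero.mpr hfid.symm
  have hWσ : W * σ = σ := by
    have hcomplσ := mul_eq_zero_of_range_mulVecLin_le hsupp hcomplρ
    rwa [sub_mul, one_mul, sub_eq_zero, eq_comm] at hcomplσ
  have hk' : 1 / k < 1 := (div_lt_one (by linarith)).mpr hk
  have hWσ_ip : ip W σ = 1 := by simp [ip, hWσ, (hdens σ hσF).2]
  linarith [hwit σ hσF]

/-- Impossibility of exact distillation: if the support of ρ contains the support of
a free state, then no measurement operator achieves perfect fidelity while being a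
valid witness with parameter k > 1. -/
theorem stmt7 {d : ℕ} (F : Set (Matrix (Fin d) (Fin d) ℂ))
    (hne : F.Nonempty) (hcl : IsClosed F) (hconv : Convex ℝ F)
    (hdens : ∀ σ' ∈ F, IsDensity σ')
    (ρ σ : Matrix (Fin d) (Fin d) ℂ) (hρ : IsDensity ρ) (hσF : σ ∈ F)
    (hsupp : LinearMap.range σ.mulVecLin ≤ LinearMap.range ρ.mulVecLin)
    (k : ℝ) (hk : 1 < k) :
    {W : Matrix (Fin d) (Fin d) ℂ | W.IsHermitian ∧ W.PosSemidef ∧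
      ((1 : Matrix (Fin d) (Fin d) ℂ) - W).PosSemidef ∧ ip ρ W = 1 ∧
      ∀ σ' ∈ F, ip W σ' ≤ 1 / k} = ∅ :=
  stmt7_general F hdens ρ σ hρ hσF hsupp k hk
end

section
/- Let F be a nonempty closed convex set of density matrices, let φ = |φ⟩⟨φ| be a pure state, δ ∈ density matrices, and W Hermitian with 0 ⪯ W ⪯ 𝟙. Define the linear map Λ(X) = ⟨X,W⟩·φ + ⟨X, 𝟙−W⟩·δ. Then Λ is completely positive and trace preserving. If moreover there exists λ ≥ 1 with δ ∈ F and (φ + (λ−1)δ)/λ ∈ F, and ⟨σ,W⟩ ≤ 1/λ for all σ ∈ F, then Λ maps F into F (Λ is resource non-generating), and Λ†(φ) = W. -/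
/-! The map `Λ` measures the POVM `{W, 𝟙 - W}` and prepares `φ` or `δ`; its Choi matrix is
`Wᵀ ⊗ φ + (𝟙 - W)ᵀ ⊗ δ`, a sum of Kronecker products of positive matrices, and it preserves trace
because the two outcome probabilities sum to `tr X`. On a density matrix `σ` it outputs
`t φ + (1 - t) δ` with `t = ⟨σ, W⟩ ∈ [0, 1/λ]`, which is the convex combination
`(tλ) · (φ + (λ - 1) δ)/λ + (1 - tλ) · δ` of two free states. Finally `⟨Λ ρ, φ⟩` exceeds `⟨ρ, W⟩`
by `⟨ρ, 𝟙 - W⟩ ⟨δ, φ⟩ ≥ 0`, using `φ² = φ`. -/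

open Matrix
open scoped ComplexOrder

/-- Choi matrix of a map on d×d matrices (CP ↔ Choi matrix PSD). -/
noncomputable def choi {d : ℕ} (Λ : Matrix (Fin d) (Fin d) ℂ → Matrix (Fin d) (Fin d) ℂ) :
    Matrix (Fin d × Fin d) (Fin d × Fin d) ℂ :=
  Matrix.of fun p q => Λ (Matrix.single p.1 q.1 1) p.2 q.2

/-- A quantum channel: completely positive (PSD Choi matrix) and trace preserving. -/
def IsCPTP {d : ℕ} (Λ : Matrix (Fin d) (Fin d) ℂ →ₗ[ℂ] Matrix (Fin d) (Fin d) ℂ) : Prop :=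
  (choi fun X => Λ X).PosSemidef ∧ ∀ X, (Λ X).trace = X.trace

open Kronecker

open scoped MatrixOrder in
theorem Matrix.PosSemidef.trace_mul_nonneg {n 𝕜 : Type*} [Fintype n] [RCLike 𝕜]
    {A B : Matrix n n 𝕜} (hA : A.PosSemidef) (hB : B.PosSemidef) : 0 ≤ (A * B).trace := by
  classical
  obtain ⟨C, rfl⟩ := CStarAlgebra.nonneg_iff_eq_star_mul_self.mp hA.nonneg
  rw [star_eq_conjTranspose, Matrix.mul_assoc, trace_mul_comm]
  exact (hB.mul_mul_conjTranspose_same C).trace_nonneg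

theorem Matrix.PosSemidef.trace_mul_eq_ip {n : Type*} [Fintype n] {A B : Matrix n n ℂ}
    (hA : A.PosSemidef) (hB : B.PosSemidef) : (A * B).trace = (ip A B : ℂ) :=
  Complex.eq_re_of_ofReal_le (by exact_mod_cast hA.trace_mul_nonneg hB)

theorem Matrix.PosSemidef.ip_nonneg {n : Type*} [Fintype n] {A B : Matrix n n ℂ}
    (hA : A.PosSemidef) (hB : B.PosSemidef) : 0 ≤ ip A B :=
  (Complex.nonneg_iff.mp (hA.trace_mul_nonneg hB)).1

theorem Convex.smul_add_one_sub_smul_mem_of_robustness {E : Type*} [AddCommGroup E]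
    [Module ℝ E] {F : Set E} (hF : Convex ℝ F) {φ δ : E} {l t : ℝ} (hl : 0 < l) (hδ : δ ∈ F)
    (hmix : (1 / l) • (φ + (l - 1) • δ) ∈ F) (ht₀ : 0 ≤ t) (ht : t ≤ 1 / l) :
    t • φ + (1 - t) • δ ∈ F := by
  have htl : t * l ≤ 1 := by rwa [le_div_iff₀ hl] at ht
  convert hF hmix hδ (show 0 ≤ t * l by positivity) (show 0 ≤ 1 - t * l by linarith)
    (add_sub_cancel _ _) using 1
  match_scalars
  · field_simp
  · field_simp
    ring

section MeasurePrepare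

variable {n : Type*} [Fintype n] [DecidableEq n]

noncomputable def measurePrepare (W φ δ X : Matrix n n ℂ) : Matrix n n ℂ :=
  (X * W).trace • φ + (X * (1 - W)).trace • δ

theorem choi_measurePrepare {d : ℕ} (W φ δ : Matrix (Fin d) (Fin d) ℂ) :
    choi (measurePrepare W φ δ) = Wᵀ ⊗ₖ φ + (1 - W)ᵀ ⊗ₖ δ := by
  ext p q
  simp only [choi, measurePrepare, of_apply, Matrix.add_apply, Matrix.smul_apply,
    trace_single_mul, smul_eq_mul, one_mul, kroneckerMap_apply, transpose_apply]

theorem posSemidef_choi_measurePrepare {d : ℕ} {W φ δ : Matrix (Fin d) (Fin d) ℂ}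
    (hW₀ : W.PosSemidef) (hW₁ : (1 - W).PosSemidef) (hφ : φ.PosSemidef) (hδ : δ.PosSemidef) :
    (choi (measurePrepare W φ δ)).PosSemidef := by
  rw [choi_measurePrepare]
  exact (hW₀.transpose.kronecker hφ).add (hW₁.transpose.kronecker hδ)

theorem trace_measurePrepare {W φ δ : Matrix n n ℂ} (hφ : φ.trace = 1) (hδ : δ.trace = 1)
    (X : Matrix n n ℂ) : (measurePrepare W φ δ X).trace = X.trace := by
  rw [measurePrepare, trace_add, trace_smul, trace_smul, hφ, hδ, smul_eq_mul, smul_eq_mul,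
    mul_one, mul_one, ← trace_add, ← Matrix.mul_add, add_sub_cancel, Matrix.mul_one]

theorem measurePrepare_of_isDensity {W φ δ σ : Matrix n n ℂ} (hσ : IsDensity σ)
    (hW₀ : W.PosSemidef) :
    measurePrepare W φ δ σ = ip σ W • φ + (1 - ip σ W) • δ := by
  have hsum : (σ * W).trace + (σ * (1 - W)).trace = 1 := by
    rw [← trace_add, ← Matrix.mul_add, add_sub_cancel, Matrix.mul_one, hσ.2]
  rw [measurePrepare, eq_sub_of_add_eq' hsum, hσ.1.trace_mul_eq_ip hW₀, ← Complex.ofReal_one,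
    ← Complex.ofReal_sub, ← Complex.coe_algebraMap, algebraMap_smul, algebraMap_smul]

theorem measurePrepare_mem {F : Set (Matrix n n ℂ)} (hF : Convex ℝ F)
    {W φ δ σ : Matrix n n ℂ} (hσ : IsDensity σ) (hW₀ : W.PosSemidef) {l : ℝ} (hl : 0 < l)
    (hδ : δ ∈ F) (hmix : (1 / l) • (φ + (l - 1) • δ) ∈ F) (hσW : ip σ W ≤ 1 / l) :
    measurePrepare W φ δ σ ∈ F := by
  rw [measurePrepare_of_isDensity hσ hW₀]
  exact hF.smul_add_one_sub_smul_mem_of_robustness hl hδ hmix (hσ.1.ip_nonneg hW₀) hσW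

theorem ip_le_ip_measurePrepare {W φ δ ρ : Matrix n n ℂ} (hφ : IsPure φ) (hδ : δ.PosSemidef)
    (hW₁ : (1 - W).PosSemidef) (hρ : ρ.PosSemidef) :
    ip ρ W ≤ ip (measurePrepare W φ δ ρ) φ := by
  have hfid : (measurePrepare W φ δ ρ * φ).trace
      = (ρ * W).trace + (ρ * (1 - W)).trace * (δ * φ).trace := by
    rw [measurePrepare, Matrix.add_mul, Matrix.smul_mul, Matrix.smul_mul, hφ.2, trace_add,
      trace_smul, trace_smul, hφ.1.2, smul_eq_mul, smul_eq_mul, mul_one]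
  have hcross : 0 ≤ (ρ * (1 - W)).trace * (δ * φ).trace :=
    mul_nonneg (hρ.trace_mul_nonneg hW₁) (hδ.trace_mul_nonneg hφ.1.1)
  rw [ip, ip, hfid, Complex.add_re]
  linarith [(Complex.nonneg_iff.mp hcross).1]

end MeasurePrepare

theorem stmt8_general {d : ℕ} (F : Set (Matrix (Fin d) (Fin d) ℂ))
    (hconv : Convex ℝ F)
    (hdens : ∀ σ ∈ F, IsDensity σ)
    (φ δ W : Matrix (Fin d) (Fin d) ℂ) (hφ : IsPure φ) (hδ : IsDensity δ)
    (hW0 : W.PosSemidef)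
    (hW1 : ((1 : Matrix (Fin d) (Fin d) ℂ) - W).PosSemidef)
    (l : ℝ) (hl : 1 ≤ l) (hδF : δ ∈ F)
    (hmix : (1 / l) • (φ + (l - 1) • δ) ∈ F)
    (hWfeas : ∀ σ ∈ F, ip σ W ≤ 1 / l) :
    (choi fun X => ((X * W).trace) • φ + ((X * (1 - W)).trace) • δ).PosSemidef ∧
    (∀ X : Matrix (Fin d) (Fin d) ℂ,
      (((X * W).trace) • φ + ((X * (1 - W)).trace) • δ).trace = X.trace) ∧
    (∀ σ ∈ F, ((σ * W).trace) • φ + ((σ * (1 - W)).trace) • δ ∈ F) ∧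
    (∀ ρ : Matrix (Fin d) (Fin d) ℂ, IsDensity ρ →
      ip (((ρ * W).trace) • φ + ((ρ * (1 - W)).trace) • δ) φ ≥ ip ρ W) :=
  ⟨posSemidef_choi_measurePrepare hW0 hW1 hφ.1.1 hδ.1,
    trace_measurePrepare hφ.1.2 hδ.2,
    fun σ hσ => measurePrepare_mem hconv (hdens σ hσ) hW0 (by linarith) hδF hmix (hWfeas σ hσ),
    fun ρ hρ => ip_le_ip_measurePrepare hφ hδ.1 hW1 hρ.1⟩

/-- The measure-and-prepare map Λ(X) = Tr(XW)·φ + Tr(X(𝟙−W))·δ is CPTP;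
given the robustness decomposition of φ via δ ∈ F and ⟨σ,W⟩ ≤ 1/l on F,
it is resource non-generating and its fidelity with φ dominates ⟨ρ,W⟩. -/
theorem stmt8 {d : ℕ} (F : Set (Matrix (Fin d) (Fin d) ℂ))
    (hne : F.Nonempty) (hcl : IsClosed F) (hconv : Convex ℝ F)
    (hdens : ∀ σ ∈ F, IsDensity σ)
    (φ δ W : Matrix (Fin d) (Fin d) ℂ) (hφ : IsPure φ) (hδ : IsDensity δ)
    (hWh : W.IsHermitian) (hW0 : W.PosSemidef)
    (hW1 : ((1 : Matrix (Fin d) (Fin d) ℂ) - W).PosSemidef)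
    (l : ℝ) (hl : 1 ≤ l) (hδF : δ ∈ F)
    (hmix : (1 / l) • (φ + (l - 1) • δ) ∈ F)
    (hWfeas : ∀ σ ∈ F, ip σ W ≤ 1 / l) :
    (choi fun X => ((X * W).trace) • φ + ((X * (1 - W)).trace) • δ).PosSemidef ∧
    (∀ X : Matrix (Fin d) (Fin d) ℂ,
      (((X * W).trace) • φ + ((X * (1 - W)).trace) • δ).trace = X.trace) ∧
    (∀ σ ∈ F, ((σ * W).trace) • φ + ((σ * (1 - W)).trace) • δ ∈ F) ∧
    (∀ ρ : Matrix (Fin d) (Fin d) ℂ, IsDensity ρ →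
      ip (((ρ * W).trace) • φ + ((ρ * (1 - W)).trace) • δ) φ ≥ ip ρ W) :=
  stmt8_general F hconv hdens φ δ W hφ hδ hW0 hW1 l hl hδF hmix hWfeas
end

section
/- Let F be a nonempty closed convex set of density matrices and define the affine robustness by its dual form Rmax^•(ρ) = sup{⟨ρ,W⟩ : W ⪰ 0, ⟨W,σ⟩ = 1 ∀σ∈F}, and the generalized robustness Rmax(ρ) = sup{⟨ρ,W⟩ : W ⪰ 0, ⟨W,σ⟩ ≤ 1 ∀σ∈F}. Then Rmax^•(ρ) = Rmax(ρ) for every density matrix ρ if and only if the resource theory is affine, i.e. F = aff(F) ∩ (density matrices). -/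
open Matrix
open scoped ComplexOrder

/-- Generalized robustness relative to a set S, primal form. -/
noncomputable def RmaxP {d : ℕ} (S : Set (Matrix (Fin d) (Fin d) ℂ))
    (ρ : Matrix (Fin d) (Fin d) ℂ) : ℝ :=
  sInf {l : ℝ | 1 ≤ l ∧ ∃ ω : Matrix (Fin d) (Fin d) ℂ, IsDensity ω ∧
    (1 / l) • (ρ + (l - 1) • ω) ∈ S}

/-! If `F` is the set of states in `aff F`, every mixture `(ρ + (λ - 1) ω) / λ` of two states is a
state, so it lies in `aff F` iff it lies in `F`, and the two infima agree. Conversely, a state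
`ρ ∈ aff F` has affine robustness `1` (take `λ = 1`); if its generalized robustness is `1` as well,
there are `λₖ → 1` and states `ωₖ` with `(ρ + (λₖ - 1) ωₖ) / λₖ ∈ F`. States are bounded
(`|ωᵢⱼ|² ≤ ωᵢᵢ ωⱼⱼ ≤ 1`), so these points tend to `ρ`, which lies in `F` since `F` is closed. -/

open Filter Topology

theorem Matrix.PosSemidef.norm_apply_sq_le {n 𝕜 : Type*} [Fintype n] [RCLike 𝕜]
    {A : Matrix n n 𝕜} (hA : A.PosSemidef) (i j : n) :
    ‖A i j‖ ^ 2 ≤ RCLike.re (A i i) * RCLike.re (A j j) := by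
  have hdet := (hA.submatrix ![i, j]).det_nonneg
  simp only [det_fin_two, submatrix_apply, cons_val_zero, cons_val_one] at hdet
  rw [← hA.isHermitian.apply j i, RCLike.star_def, RCLike.mul_conj] at hdet
  have hii := (RCLike.nonneg_iff.mp (hA.diag_nonneg (i := i))).2
  have hjj := (RCLike.nonneg_iff.mp (hA.diag_nonneg (i := j))).2
  simpa [RCLike.mul_re, hii, hjj, sub_nonneg] using (RCLike.nonneg_iff.mp hdet).1

theorem convex_setOf_isDensity (n : Type*) [Fintype n] :
    Convex ℝ {ρ : Matrix n n ℂ | IsDensity ρ} := by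
  rintro ρ ⟨hρ, hρtr⟩ ω ⟨hω, hωtr⟩ a b ha hb hab
  refine ⟨(hρ.smul ha).add (hω.smul hb), ?_⟩
  rw [trace_add, trace_smul, trace_smul, hρtr, hωtr, ← add_smul, hab, one_smul]

theorem IsDensity.re_apply_self_le_one {n : Type*} [Fintype n] {ω : Matrix n n ℂ}
    (hω : IsDensity ω) (i : n) : (ω i i).re ≤ 1 := by
  have htr : ∑ k, (ω k k).re = 1 := by
    simpa [trace, Complex.re_sum] using congrArg Complex.re hω.2
  rw [← htr]
  exact Finset.single_le_sum (fun k _ => (Complex.nonneg_iff.mp (hω.1.diag_nonneg (i := k))).1)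
    (Finset.mem_univ i)

section SupNorm

-- The entrywise sup norm; it induces the product topology that `Matrix` already carries.
attribute [local instance] Matrix.seminormedAddCommGroup Matrix.normedSpace

theorem IsDensity.norm_le_one {n : Type*} [Fintype n] {ω : Matrix n n ℂ} (hω : IsDensity ω) :
    ‖ω‖ ≤ 1 := by
  refine (norm_le_iff zero_le_one).mpr fun i j => ?_
  refine (pow_le_one_iff_of_nonneg (norm_nonneg _) two_ne_zero).mp ?_
  calc ‖ω i j‖ ^ 2 ≤ (ω i i).re * (ω j j).re := hω.1.norm_apply_sq_le i j
    _ ≤ 1 * 1 := mul_le_mul (hω.re_apply_self_le_one i) (hω.re_apply_self_le_one j)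
      (Complex.nonneg_iff.mp (hω.1.diag_nonneg (i := j))).1 zero_le_one
    _ = 1 := one_mul 1

theorem tendsto_one_div_smul_add_sub_one_smul {n : Type*} [Fintype n] {ρ : Matrix n n ℂ}
    {l : ℕ → ℝ} {ω : ℕ → Matrix n n ℂ} (hl : Tendsto l atTop (𝓝 1)) (hω : ∀ k, IsDensity (ω k)) :
    Tendsto (fun k => (1 / l k) • (ρ + (l k - 1) • ω k)) atTop (𝓝 ρ) := by
  have hinv : Tendsto (fun k => 1 / l k) atTop (𝓝 1) := by
    simpa using hl.inv₀ one_ne_zero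
  have hcoef : Tendsto (fun k => 1 / l k * (l k - 1)) atTop (𝓝 0) := by
    simpa using hinv.mul (hl.sub_const 1)
  have hbdd : IsBoundedUnder (· ≤ ·) atTop (norm ∘ ω) :=
    isBoundedUnder_of ⟨1, fun k => (hω k).norm_le_one⟩
  simpa [smul_add, smul_smul] using
    (hinv.smul_const ρ).add (hcoef.zero_smul_isBoundedUnder_le hbdd)

end SupNorm

theorem RmaxP_eq_one_of_mem {d : ℕ} {S : Set (Matrix (Fin d) (Fin d) ℂ)}
    {ρ : Matrix (Fin d) (Fin d) ℂ} (hρ : IsDensity ρ) (hρS : ρ ∈ S) : RmaxP S ρ = 1 :=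
  IsLeast.csInf_eq ⟨⟨le_rfl, ρ, hρ, by simpa using hρS⟩, fun _ hl => hl.1⟩

theorem mem_of_RmaxP_eq_one {d : ℕ} {S : Set (Matrix (Fin d) (Fin d) ℂ)}
    {ρ : Matrix (Fin d) (Fin d) ℂ} (hS : IsClosed S) (h : RmaxP S ρ = 1) : ρ ∈ S := by
  unfold RmaxP at h
  set L := {l : ℝ | 1 ≤ l ∧ ∃ ω : Matrix (Fin d) (Fin d) ℂ, IsDensity ω ∧
    (1 / l) • (ρ + (l - 1) • ω) ∈ S}
  have hL : L.Nonempty := by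
    by_contra hL
    rw [Set.not_nonempty_iff_eq_empty.mp hL, Real.sInf_empty] at h
    exact zero_ne_one h
  obtain ⟨l, -, hl, hlL⟩ := exists_seq_tendsto_sInf hL ⟨1, fun _ hx => hx.1⟩
  choose ω hω hωS using fun k => (hlL k).2
  exact hS.mem_of_tendsto (tendsto_one_div_smul_add_sub_one_smul (h ▸ hl) hω)
    (Eventually.of_forall hωS)

theorem RmaxP_inter_setOf_isDensity {d : ℕ} (S : Set (Matrix (Fin d) (Fin d) ℂ))
    {ρ : Matrix (Fin d) (Fin d) ℂ} (hρ : IsDensity ρ) :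
    RmaxP (S ∩ {σ | IsDensity σ}) ρ = RmaxP S ρ := by
  unfold RmaxP
  congr 1
  ext l
  refine and_congr_right fun hl => exists_congr fun ω => and_congr_right fun hω =>
    and_iff_left ?_
  have hl0 : l ≠ 0 := (zero_lt_one.trans_le hl).ne'
  have hmix : (1 / l) • (ρ + (l - 1) • ω) = (1 / l) • ρ + (1 - 1 / l) • ω := by
    rw [smul_add, smul_smul]
    congr 2
    field_simp
  rw [hmix]
  exact convex_setOf_isDensity _ hρ hω (by positivity)
    (sub_nonneg.2 (div_le_one_of_le₀ hl (zero_le_one.trans hl))) (by ring)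

theorem stmt12_general {d : ℕ} (F : Set (Matrix (Fin d) (Fin d) ℂ))
    (hcl : IsClosed F)
    (hdens : ∀ σ ∈ F, IsDensity σ) :
    (∀ ρ : Matrix (Fin d) (Fin d) ℂ, IsDensity ρ →
        RmaxP (affineSpan ℝ F : Set (Matrix (Fin d) (Fin d) ℂ)) ρ = RmaxP F ρ) ↔
      F = (affineSpan ℝ F : Set (Matrix (Fin d) (Fin d) ℂ)) ∩
        {ρ : Matrix (Fin d) (Fin d) ℂ | IsDensity ρ} := by
  refine ⟨fun h => ?_, fun hF ρ hρ => ?_⟩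
  · refine (Set.subset_inter (subset_affineSpan ℝ F) hdens).antisymm ?_
    rintro ρ ⟨hρF, hρ⟩
    exact mem_of_RmaxP_eq_one hcl ((h ρ hρ).symm.trans (RmaxP_eq_one_of_mem hρ hρF))
  · rw [← RmaxP_inter_setOf_isDensity _ hρ, ← hF]

/-- The affine robustness equals the generalized robustness on all states iff
the resource theory is affine. -/
theorem stmt12 {d : ℕ} (F : Set (Matrix (Fin d) (Fin d) ℂ))
    (hne : F.Nonempty) (hcl : IsClosed F) (hconv : Convex ℝ F)
    (hdens : ∀ σ ∈ F, IsDensity σ) :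
    (∀ ρ : Matrix (Fin d) (Fin d) ℂ, IsDensity ρ →
        RmaxP (affineSpan ℝ F : Set (Matrix (Fin d) (Fin d) ℂ)) ρ = RmaxP F ρ) ↔
      F = (affineSpan ℝ F : Set (Matrix (Fin d) (Fin d) ℂ)) ∩
        {ρ : Matrix (Fin d) (Fin d) ℂ | IsDensity ρ} :=
  stmt12_general F hcl hdens
end
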